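/- For every n ≥ 1 the Eulerian idempotent satisfies the symmetry eₙ = (−1)^{n+1} · eₙ∘(·)^ω, where ω is the permutation of {1,…,n} given by ω(i) = n+1−i; explicitly, for every word w₁⋯wₙ of length n in the letters x and y, eₙ(w₁⋯wₙ) = (−1)^{n+1} eₙ(wₙwₙ₋₁⋯w₁). -/

import Mathlib

noncomputable section

open scoped BigOperators

variable (K : Type) [Field K] [CharZero K]

/-- The free associative algebra `T = K⟨x,y⟩`, realized as the monoid algebra of the
free monoid on two generators. -/
abbrev T := MonoidAlgebra K (FreeMonoid (Fin 2))

/-- The word `v₁⋯vₙ` (a list of letters) as an element of `T`. -/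
def word (l : List (Fin 2)) : T K := MonoidAlgebra.single (FreeMonoid.ofList l) 1

/-- The generator `x`. -/
def X : T K := word K [0]

/-- The generator `y`. -/
def Y : T K := word K [1]

/-- Right-nested bracket `[v₁,[v₂,…,[vₙ₋₁,vₙ]…]]` of a word. -/
def brList : List (Fin 2) → T K
  | [] => 0
  | [v] => word K [v]
  | v :: rest => word K [v] * brList rest - brList rest * word K [v]

/-- The Dynkin map `γ : T → T`, sending a word `v₁⋯vₙ` to
`(1/n)[v₁,[v₂,…,[vₙ₋₁,vₙ]…]]` (and `1 ↦ 0`). -/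
def dynkin : T K →ₗ[K] T K :=
  (Finsupp.linearCombination K fun w : FreeMonoid (Fin 2) =>
    ((w.toList.length : K)⁻¹) • brList K w.toList) ∘ₗ
    (MonoidAlgebra.coeffLinearEquiv K : T K ≃ₗ[K] _).toLinearMap

attribute [local instance] LieRing.ofAssociativeRing

/-- The free Lie algebra `L` on `x, y`, as the Lie subalgebra of `T` generated by `x` and `y`. -/
def L : LieSubalgebra K (T K) := LieSubalgebra.lieSpan K (T K) {X K, Y K}

/-- The degree-`n` homogeneous component `T_n` of `T`, spanned by the words of length `n`. -/
def homog (n : ℕ) : Submodule K (T K) :=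
  Submodule.span K { t | ∃ l : List (Fin 2), l.length = n ∧ t = word K l }

/-- The value `σ(i)` of a permutation of `{0,…,n-1}` on a natural number (junk value `0`
outside the range). -/
def permVal {n : ℕ} (σ : Equiv.Perm (Fin n)) (i : ℕ) : ℕ :=
  if h : i < n then (σ ⟨i, h⟩ : ℕ) else 0

/-- The (0-indexed) descent set of a permutation: positions `i ∈ {0,…,n-2}` with
`σ(i) > σ(i+1)`. -/
def descSet {n : ℕ} (σ : Equiv.Perm (Fin n)) : Finset ℕ :=
  (Finset.range (n - 1)).filter fun i => permVal σ (i + 1) < permVal σ i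

/-- The number of descents of a permutation. -/
def descNum {n : ℕ} (σ : Equiv.Perm (Fin n)) : ℕ := (descSet σ).card

/-- `DSet n k` is the set of permutations of `{0,…,n-1}` whose descent set is exactly
the first `k` positions (this is `D_{1..k}` of the paper, in 0-indexed form). -/
def DSet (n k : ℕ) : Finset (Equiv.Perm (Fin n)) :=
  Finset.univ.filter fun σ => descSet σ = Finset.range k

/-- The Eulerian coefficient `c_σ = (-1)^{d(σ)} (binom (n-1) (d σ))⁻¹`. -/
def eulCoeff {n : ℕ} (σ : Equiv.Perm (Fin n)) : K :=
  (-1 : K) ^ descNum σ * ((Nat.choose (n - 1) (descNum σ) : K))⁻¹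

/-- The degree-`n` Eulerian idempotent applied to the word `w₁⋯wₙ` given by
`v : Fin n → Fin 2`: `eₙ(w) = Σ_σ c_σ w^σ`. -/
def eul (n : ℕ) (v : Fin n → Fin 2) : T K :=
  ∑ σ : Equiv.Perm (Fin n), eulCoeff K σ • word K (List.ofFn fun i => v (σ i))

/-- The `a`-part of an element of `T`: the linear map sending a word `a·w ↦ w` and
any word not starting with the letter `a` (or the empty word) to `0`.  For `p` with zero
constant term, `p = x·(letterPart 0 p) + y·(letterPart 1 p)`. -/
def letterPart (a : Fin 2) : T K →ₗ[K] T K :=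
  (Finsupp.linearCombination K fun w : FreeMonoid (Fin 2) =>
    match w.toList with
    | [] => 0
    | b :: rest => if b = a then word K rest else 0) ∘ₗ
    (MonoidAlgebra.coeffLinearEquiv K : T K ≃ₗ[K] _).toLinearMap

/-- The algebra endomorphism `s : T → T` with `s(x) = -y`, `s(y) = -x`. -/
def sMap : T K →ₐ[K] T K :=
  MonoidAlgebra.lift K (T K) (FreeMonoid (Fin 2))
    (FreeMonoid.lift fun a : Fin 2 => if a = 0 then -(Y K) else -(X K))

/-!
Let `ω` be the reversal `i ↦ n - 1 - i`. Post-composing a permutation with `ω` turns every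
ascent into a descent and vice versa, so `d(ωσ) = n - 1 - d(σ)`; by the symmetry of binomial
coefficients this gives `c_{ωσ} = (-1)^{n+1} c_σ`. Reindexing the sum defining `eₙ(wₙ⋯w₁)`
by `σ ↦ ωσ` then yields the identity, since reversing the word and permuting by `ωσ` is
permuting by `σ`.
-/

open Finset

lemma permVal_lt {n i : ℕ} (σ : Equiv.Perm (Fin n)) (hi : i < n) : permVal σ i < n := by
  simp [permVal, hi]

lemma permVal_succ_ne {n i : ℕ} (σ : Equiv.Perm (Fin n)) (hi : i + 1 < n) :
    permVal σ (i + 1) ≠ permVal σ i := by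
  simp [permVal, hi, Nat.lt_of_succ_lt hi, Fin.val_inj, Fin.ext_iff]

lemma permVal_revPerm_mul {n i : ℕ} (σ : Equiv.Perm (Fin n)) (hi : i < n) :
    permVal (Fin.revPerm * σ) i = n - 1 - permVal σ i := by
  simp only [permVal, dif_pos hi, Equiv.Perm.mul_apply, Fin.revPerm_apply, Fin.val_rev]
  omega

lemma descSet_subset_range {n : ℕ} (σ : Equiv.Perm (Fin n)) :
    descSet σ ⊆ range (n - 1) :=
  filter_subset _ _

lemma descNum_le {n : ℕ} (σ : Equiv.Perm (Fin n)) : descNum σ ≤ n - 1 :=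
  (card_le_card (descSet_subset_range σ)).trans_eq (card_range _)

lemma descSet_revPerm_mul {n : ℕ} (σ : Equiv.Perm (Fin n)) :
    descSet (Fin.revPerm * σ) = range (n - 1) \ descSet σ := by
  ext i
  by_cases hi : i < n - 1
  · have hi' : i + 1 < n := by omega
    have hlt := permVal_lt σ hi'
    have hne := permVal_succ_ne σ hi'
    simp only [descSet, mem_filter, mem_sdiff, mem_range, hi, true_and,
      permVal_revPerm_mul σ hi', permVal_revPerm_mul σ (Nat.lt_of_succ_lt hi')]
    omega
  · simp [descSet, hi]

lemma descNum_revPerm_mul {n : ℕ} (σ : Equiv.Perm (Fin n)) :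
    descNum (Fin.revPerm * σ) = n - 1 - descNum σ := by
  rw [descNum, descSet_revPerm_mul, card_sdiff_of_subset (descSet_subset_range σ), card_range,
    descNum]

lemma neg_one_pow_mul_eulCoeff_revPerm_mul (K : Type) [Field K] {n : ℕ} (hn : 1 ≤ n)
    (σ : Equiv.Perm (Fin n)) :
    (-1 : K) ^ (n + 1) * eulCoeff K (Fin.revPerm * σ) = eulCoeff K σ := by
  have hd := descNum_le σ
  have hexp : n + 1 + (n - 1 - descNum σ) = descNum σ + 2 * (n - descNum σ) := by omega
  rw [eulCoeff, eulCoeff, descNum_revPerm_mul, Nat.choose_symm hd, ← mul_assoc, ← pow_add,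
    hexp, pow_add, pow_mul, neg_one_sq, one_pow, mul_one]

/-- Symmetry of the Eulerian idempotent: for every word `w₁⋯wₙ` of length `n ≥ 1`,
`eₙ(w₁⋯wₙ) = (-1)^{n+1} eₙ(wₙ⋯w₁)`. -/
theorem stmt7 (n : ℕ) (hn : 1 ≤ n) (v : Fin n → Fin 2) :
    eul K n v = ((-1 : K) ^ (n + 1)) • eul K n (fun i => v i.rev) := by
  rw [eul, eul, smul_sum]
  refine Fintype.sum_equiv (Equiv.mulLeft Fin.revPerm) _ _ fun σ => ?_
  simp [smul_smul, neg_one_pow_mul_eulCoeff_revPerm_mul K hn σ]
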